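/- arXiv:1508.06379 — 5 statements merged into one kernel-verified Lean document; each statement's English description precedes it below -/
import Mathlib

section
/- Suppose $f_{ij} \geq 0$ for all $i \neq j$ in $\{1,\dots,N\}$ and the fourth-order moment conditions $\sum_{j} f_{ij} r_{ij}^\alpha = 0$ hold for every multi-index $\alpha$ with $|\alpha| = 4$, where $r_{ij} = x_j - x_i$ and $r_{ii} = 0$. Then $\sum_{j\neq i} f_{ij} |r_{ij}|^4 = 0$, hence $f_{ij} |r_{ij}| = 0$ for every $j \neq i$; in particular if all particle positions $x_j$ ($j \neq i$) are distinct from $x_i$, then $f_{ij} = 0$ for all $j \neq i$, which contradicts the second-order condition $\sum_j f_{ij} ((r_{ij}^x)^2 + (r_{ij}^y)^2) = 4$. Thus no nonnegative stencil on distinct points can satisfy both the fourth-order moment conditions and the second-order consistency conditions. -/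
/-! The fourth-order moment conditions for the multi-indices `(4,0)`, `(2,2)`, `(0,4)`
combine, with coefficients `1, 2, 1`, into `∑ⱼ fᵢⱼ |rᵢⱼ|⁴ = 0`. All terms are nonnegative,
and `|rᵢⱼ| > 0` for `j ≠ i`, so every off-diagonal weight vanishes; the second moment
`∑ⱼ fᵢⱼ |rᵢⱼ|²` is then `0`, not `4`. -/

open Finset

theorem sum_mul_sq_add_sq_sq_eq_zero {ι : Type*} (s : Finset ι) (w u v : ι → ℝ)
    (hmoment : ∀ a b : ℕ, a + b = 4 → ∑ j ∈ s, w j * u j ^ a * v j ^ b = 0) :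
    ∑ j ∈ s, w j * (u j ^ 2 + v j ^ 2) ^ 2 = 0 := by
  calc ∑ j ∈ s, w j * (u j ^ 2 + v j ^ 2) ^ 2
      = ∑ j ∈ s, w j * u j ^ 4 * v j ^ 0 + 2 * ∑ j ∈ s, w j * u j ^ 2 * v j ^ 2
          + ∑ j ∈ s, w j * u j ^ 0 * v j ^ 4 := by
        rw [mul_sum, ← sum_add_distrib, ← sum_add_distrib]
        exact sum_congr rfl fun j _ => by ring
    _ = 0 := by rw [hmoment 4 0 rfl, hmoment 2 2 rfl, hmoment 0 4 rfl]; ring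

theorem eq_zero_of_sum_mul_eq_zero_of_pos {ι : Type*} {s : Finset ι} {w g : ι → ℝ}
    (hw : ∀ j ∈ s, 0 ≤ w j) (hg : ∀ j ∈ s, 0 < g j) (hsum : ∑ j ∈ s, w j * g j = 0)
    {j : ι} (hj : j ∈ s) : w j = 0 := by
  have hterm := (sum_eq_zero_iff_of_nonneg fun k hk =>
    mul_nonneg (hw k hk) (hg k hk).le).mp hsum j hj
  exact (mul_eq_zero.mp hterm).resolve_right (hg j hj).ne'

theorem sub_sq_add_sub_sq_pos_of_ne {p q : ℝ × ℝ} (h : p ≠ q) :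
    0 < (p.1 - q.1) ^ 2 + (p.2 - q.2) ^ 2 := by
  by_contra! hle
  have h1 : p.1 - q.1 = 0 := by nlinarith [sq_nonneg (p.1 - q.1), sq_nonneg (p.2 - q.2)]
  have h2 : p.2 - q.2 = 0 := by nlinarith [sq_nonneg (p.1 - q.1), sq_nonneg (p.2 - q.2)]
  exact h (Prod.ext (sub_eq_zero.mp h1) (sub_eq_zero.mp h2))

/-- For a nonnegative stencil satisfying the fourth-order moment
conditions one has `∑_{j≠i} f_ij |r_ij|⁴ = 0`, hence `f_ij = 0` for all `j ≠ i`
when the points are distinct; this contradicts the second-order consistency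
condition, so no such stencil exists. -/
theorem stmt_1 {N : ℕ} (x : Fin N → ℝ × ℝ) (f : Fin N → Fin N → ℝ) (i : Fin N)
    (hnonneg : ∀ j, j ≠ i → 0 ≤ f i j)
    (hdistinct : ∀ j, j ≠ i → x j ≠ x i)
    (hfourth : ∀ a b : ℕ, a + b = 4 →
      ∑ j, f i j * ((x j).1 - (x i).1)^a * ((x j).2 - (x i).2)^b = 0) :
    (∑ j ∈ Finset.univ.erase i,
        f i j * (((x j).1 - (x i).1)^2 + ((x j).2 - (x i).2)^2)^2 = 0) ∧
    (∀ j, j ≠ i → f i j = 0) ∧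
    ¬ (∑ j, f i j * (((x j).1 - (x i).1)^2 + ((x j).2 - (x i).2)^2) = 4) := by
  set d : Fin N → ℝ := fun j => ((x j).1 - (x i).1) ^ 2 + ((x j).2 - (x i).2) ^ 2 with hd
  have hd_self : d i = 0 := by simp [hd]
  have hquartic : ∑ j ∈ univ.erase i, f i j * d j ^ 2 = 0 := by
    rw [sum_erase _ (by simp [hd_self])]
    exact sum_mul_sq_add_sq_sq_eq_zero _ _ _ _ hfourth
  have hzero : ∀ j, j ≠ i → f i j = 0 := fun j hj =>
    eq_zero_of_sum_mul_eq_zero_of_pos (fun k hk => hnonneg k (ne_of_mem_erase hk))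
      (fun k hk => pow_pos (sub_sq_add_sub_sq_pos_of_ne (hdistinct k (ne_of_mem_erase hk))) 2)
      hquartic (mem_erase.mpr ⟨hj, mem_univ j⟩)
  have hsecond : ∑ j, f i j * d j = 0 := sum_eq_zero fun j _ => by
    rcases eq_or_ne j i with rfl | hj
    · rw [hd_self, mul_zero]
    · rw [hzero j hj, zero_mul]
  exact ⟨hquartic, hzero, by rw [hsecond]; norm_num⟩
end

section
/- Let $F = (f_{ij})$ be a matrix with $f_{ij} \geq 0$ for $i \neq j$, $f_{ii} = -\sum_{j\neq i} f_{ij}$, and suppose for each $i$ that $-f_{ii} \leq 4 (rh)^{-2}$ (as follows from Lemma on stencil bounds). Then for any $\nu, \Delta t > 0$ with $\Delta t \leq (rh)^2/(4\nu)$, the forward Euler matrix $C = I + \nu\Delta t\, F^\top$ satisfies $\|C\|_1 = 1$, i.e., $\|\Gamma^{n+1}\|_{\ell^1} \leq \|\Gamma^n\|_{\ell^1}$ for every $\Gamma^n \in \mathbb{R}^N$. -/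
open Finset

noncomputable def colNorm {N : ℕ} [NeZero N] (C : Matrix (Fin N) (Fin N) ℝ) : ℝ :=
  Finset.univ.sup' Finset.univ_nonempty (fun j => ∑ i, |C i j|)

/-!
With zero row sums and nonnegative off-diagonal entries, `C = I + c Fᵀ` has column sums
`1 + c ∑ⱼ f_ij = 1`, and the time-step restriction gives `c (-f_ii) ≤ 1`, i.e. a nonnegative
diagonal. So `C` is column stochastic, and a nonnegative matrix with unit column sums has
`ℓ¹` operator norm exactly `1`.
-/

namespace Matrix

variable {n R : Type*} [Fintype n]

section LinearOrderedRing

variable [CommRing R] [LinearOrder R] [IsStrictOrderedRing R]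

lemma sum_abs_mulVec_le (M : Matrix n n R) (v : n → R) :
    ∑ i, |(M *ᵥ v) i| ≤ ∑ j, (∑ i, |M i j|) * |v j| :=
  calc ∑ i, |(M *ᵥ v) i| ≤ ∑ i, ∑ j, |M i j * v j| :=
        sum_le_sum fun i _ => abs_sum_le_sum_abs _ _
    _ = ∑ j, (∑ i, |M i j|) * |v j| := by
        rw [sum_comm]
        simp only [abs_mul, sum_mul]

lemma sum_abs_col_of_mem_colStochastic [DecidableEq n] {M : Matrix n n R}
    (hM : M ∈ colStochastic R n) (j : n) : ∑ i, |M i j| = 1 := by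
  simp only [abs_of_nonneg (nonneg_of_mem_colStochastic hM), sum_col_of_mem_colStochastic hM]

lemma sum_abs_mulVec_le_of_mem_colStochastic [DecidableEq n] {M : Matrix n n R}
    (hM : M ∈ colStochastic R n) (v : n → R) : ∑ i, |(M *ᵥ v) i| ≤ ∑ i, |v i| := by
  simpa only [sum_abs_col_of_mem_colStochastic hM, one_mul] using sum_abs_mulVec_le M v

end LinearOrderedRing

variable [DecidableEq n]

lemma neg_diag_nonneg_of_sum_eq_zero {f : Matrix n n ℝ} (hnonneg : ∀ i j, i ≠ j → 0 ≤ f i j)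
    (hrow : ∀ i, ∑ j, f i j = 0) (i : n) : 0 ≤ -f i i := by
  have hsplit := add_sum_erase univ (f i) (mem_univ i)
  rw [hrow i] at hsplit
  have : 0 ≤ ∑ j ∈ univ.erase i, f i j :=
    sum_nonneg fun j hj => hnonneg i j (ne_of_mem_erase hj).symm
  linarith

lemma one_add_smul_transpose_mem_colStochastic {f : Matrix n n ℝ} {c : ℝ} (hc : 0 ≤ c)
    (hnonneg : ∀ i j, i ≠ j → 0 ≤ f i j) (hrow : ∀ i, ∑ j, f i j = 0)
    (hdiag : ∀ i, c * -f i i ≤ 1) : 1 + c • fᵀ ∈ colStochastic ℝ n := by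
  refine mem_colStochastic_iff_sum.2 ⟨fun i j => ?_, fun j => ?_⟩
  · rcases eq_or_ne i j with rfl | hij
    · simp only [add_apply, one_apply_eq, smul_apply, transpose_apply, smul_eq_mul]
      linarith [hdiag i]
    · simpa [one_apply_ne hij] using mul_nonneg hc (hnonneg j i hij.symm)
  · simp only [add_apply, smul_apply, transpose_apply, smul_eq_mul, sum_add_distrib,
      ← mul_sum, hrow, mul_zero, add_zero]
    simp [one_apply]

end Matrix

lemma colNorm_eq_one_of_mem_colStochastic {N : ℕ} [NeZero N] {C : Matrix (Fin N) (Fin N) ℝ}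
    (hC : C ∈ Matrix.colStochastic ℝ (Fin N)) : colNorm C = 1 := by
  simp only [colNorm, Matrix.sum_abs_col_of_mem_colStochastic hC, sup'_const]

lemma mul_le_one_of_le_div_of_le_div {c d x : ℝ} (hx : 0 ≤ x) (hd : 0 ≤ d) (hc : c ≤ x / 4)
    (hdx : d ≤ 4 / x) : c * d ≤ 1 :=
  calc c * d ≤ x / 4 * (4 / x) := mul_le_mul hc hdx hd (by positivity)
    _ = x * x⁻¹ := by ring
    _ ≤ 1 := mul_inv_le_one

theorem stmt_3_general {N : ℕ} [NeZero N] (f : Matrix (Fin N) (Fin N) ℝ)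
    (r h ν Δt : ℝ) (hν : 0 < ν) (hΔt : 0 < Δt)
    (hnonneg : ∀ i j, i ≠ j → 0 ≤ f i j)
    (hrow : ∀ i, f i i = -∑ j ∈ Finset.univ.erase i, f i j)
    (hdiag : ∀ i, -f i i ≤ 4 / (r * h)^2)
    (hstep : Δt ≤ (r * h)^2 / (4 * ν)) :
    colNorm (1 + (ν * Δt) • f.transpose) = 1 ∧
    ∀ Γ : Fin N → ℝ,
      ∑ i, |(1 + (ν * Δt) • f.transpose).mulVec Γ i| ≤ ∑ i, |Γ i| := by
  have hsum : ∀ i, ∑ j, f i j = 0 := fun i => by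
    rw [← add_sum_erase univ (f i) (mem_univ i), hrow i, neg_add_cancel]
  have hνΔt : ν * Δt ≤ (r * h)^2 / 4 := by
    rw [le_div_iff₀ (by positivity : (0 : ℝ) < 4 * ν)] at hstep
    rw [le_div_iff₀ (by norm_num : (0 : ℝ) < 4)]
    linarith
  have hC := Matrix.one_add_smul_transpose_mem_colStochastic (by positivity) hnonneg hsum
    fun i => mul_le_one_of_le_div_of_le_div (sq_nonneg _)
      (Matrix.neg_diag_nonneg_of_sum_eq_zero hnonneg hsum i) hνΔt (hdiag i)
  exact ⟨colNorm_eq_one_of_mem_colStochastic hC,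
    Matrix.sum_abs_mulVec_le_of_mem_colStochastic hC⟩

/-- Under the a-priori time-step bound `Δt ≤ (rh)²/(4ν)` the
forward Euler matrix `C = I + νΔt Fᵀ` of a nonnegative stencil with zero row
sums and `-f_ii ≤ 4(rh)⁻²` satisfies `‖C‖₁ = 1`; in particular the scheme is
an `ℓ¹`-contraction. -/
theorem stmt_3 {N : ℕ} [NeZero N] (f : Matrix (Fin N) (Fin N) ℝ)
    (r h ν Δt : ℝ) (hr : 0 < r) (hh : 0 < h) (hν : 0 < ν) (hΔt : 0 < Δt)
    (hnonneg : ∀ i j, i ≠ j → 0 ≤ f i j)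
    (hrow : ∀ i, f i i = -∑ j ∈ Finset.univ.erase i, f i j)
    (hdiag : ∀ i, -f i i ≤ 4 / (r * h)^2)
    (hstep : Δt ≤ (r * h)^2 / (4 * ν)) :
    colNorm (1 + (ν * Δt) • f.transpose) = 1 ∧
    ∀ Γ : Fin N → ℝ,
      ∑ i, |(1 + (ν * Δt) • f.transpose).mulVec Γ i| ≤ ∑ i, |Γ i| :=
  stmt_3_general f r h ν Δt hν hΔt hnonneg hrow hdiag hstep
end

section
/- Consider particles with positions $x_i(t) \in \mathbb{R}^2$ and circulations $\Gamma_i(t)$ evolving by $\dot{x}_i = \sum_j K(x_j - x_i)\Gamma_j$ and $\dot{\Gamma}_i = \nu \sum_j f_{ji}\Gamma_j$, where $K$ is the Biot--Savart kernel ($K(0)=0$, $K(z) = (z^y,-z^x)/(2\pi|z|^2)$ for $z\neq 0$) and the stencil satisfies $\sum_j f_{ij} = 0$ and $\sum_j f_{ij}(x_j - x_i) = 0$ for all $i$ at all times. Then the linear momentum $I_1(t) = \sum_i \Gamma_i(t) x_i(t)$ is conserved: $\frac{d}{dt} I_1 = 0$. -/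
/-!
Differentiating `∑ Γᵢ xᵢ` gives a convective part `∑ᵢ Γᵢ ẋᵢ = ∑ᵢ ∑ⱼ Γᵢ Γⱼ K(xⱼ - xᵢ)` and a
diffusive part `∑ᵢ Γ̇ᵢ xᵢ`. The convective double sum vanishes because its summand is antisymmetric
in `(i, j)`, `K` being odd. Exchanging the order of summation, the diffusive part is
`ν ∑ⱼ Γⱼ ∑ᵢ fⱼᵢ xᵢ`, and each inner sum `∑ᵢ fⱼᵢ xᵢ = ∑ᵢ fⱼᵢ (xᵢ - xⱼ) + (∑ᵢ fⱼᵢ) xⱼ` vanishes by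
the first- and zeroth-order moment conditions.
-/

open Real

noncomputable def biotSavart (z : ℝ × ℝ) : ℝ × ℝ :=
  if z = 0 then 0
  else (z.2 / (2 * π * (z.1^2 + z.2^2)), -z.1 / (2 * π * (z.1^2 + z.2^2)))

open Finset

theorem biotSavart_neg (z : ℝ × ℝ) : biotSavart (-z) = -biotSavart z := by
  by_cases hz : z = 0 <;> simp [biotSavart, hz, neg_div]

theorem sum_sum_eq_zero_of_antisymm {ι G : Type*} [AddCommGroup G] [IsAddTorsionFree G]
    (s : Finset ι) {a : ι → ι → G} (ha : ∀ i j, a j i = -a i j) :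
    ∑ i ∈ s, ∑ j ∈ s, a i j = 0 := by
  rw [← self_eq_neg]
  calc ∑ i ∈ s, ∑ j ∈ s, a i j = ∑ i ∈ s, ∑ j ∈ s, a j i := sum_comm
    _ = -∑ i ∈ s, ∑ j ∈ s, a i j := by
        simp only [← sum_neg_distrib]
        exact sum_congr rfl fun i _ => sum_congr rfl fun j _ => ha i j

theorem sum_smul_sum_smul_eq_zero_of_odd {ι R E F : Type*} [Fintype ι] [CommRing R]
    [AddCommGroup E] [AddCommGroup F] [Module R F] [IsAddTorsionFree F]
    {K : E → F} (hK : ∀ z, K (-z) = -K z) (Γ : ι → R) (x : ι → E) :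
    ∑ i, Γ i • ∑ j, Γ j • K (x j - x i) = 0 := by
  simp only [smul_sum]
  refine sum_sum_eq_zero_of_antisymm _ fun i j => ?_
  rw [← neg_sub, hK, smul_neg, smul_neg, smul_comm]

theorem sum_smul_eq_zero_of_moments {ι R M : Type*} [Fintype ι] [Ring R] [AddCommGroup M]
    [Module R M] {w : ι → R} {x : ι → M} (x₀ : M) (h0 : ∑ j, w j = 0)
    (h1 : ∑ j, w j • (x j - x₀) = 0) :
    ∑ j, w j • x j = 0 := by
  simpa only [smul_sub, sum_sub_distrib, ← sum_smul, h0, zero_smul, sub_zero] using h1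

theorem sum_stencil_smul_eq_zero {ι R M : Type*} [Fintype ι] [CommRing R] [AddCommGroup M]
    [Module R M] (ν : R) (f : ι → ι → R) (Γ : ι → R) (x : ι → M)
    (hmom0 : ∀ i, ∑ j, f i j = 0) (hmom1 : ∀ i, ∑ j, f i j • (x j - x i) = 0) :
    ∑ i, (ν * ∑ j, f j i * Γ j) • x i = 0 := by
  calc ∑ i, (ν * ∑ j, f j i * Γ j) • x i = ν • ∑ j, Γ j • ∑ i, f j i • x i := by
        simp only [mul_sum, sum_smul, smul_sum, smul_smul]
        rw [sum_comm]
        simp only [mul_comm]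
    _ = 0 := by
        simp only [sum_smul_eq_zero_of_moments _ (hmom0 _) (hmom1 _), smul_zero, sum_const_zero]

theorem stmt_6_general {N : ℕ} (ν : ℝ)
    (x : ℝ → Fin N → ℝ × ℝ) (Γ : ℝ → Fin N → ℝ) (f : ℝ → Fin N → Fin N → ℝ)
    (hx : ∀ i t, HasDerivAt (fun s => x s i)
      (∑ j, Γ t j • biotSavart (x t j - x t i)) t)
    (hΓ : ∀ i t, HasDerivAt (fun s => Γ s i) (ν * ∑ j, f t j i * Γ t j) t)
    (hmom0 : ∀ t i, ∑ j, f t i j = 0)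
    (hmom1 : ∀ t i, ∑ j, f t i j • (x t j - x t i) = (0 : ℝ × ℝ)) :
    ∀ t, HasDerivAt (fun s => ∑ i, Γ s i • x s i) (0 : ℝ × ℝ) t := by
  intro t
  have hconv : ∑ i, Γ t i • ∑ j, Γ t j • biotSavart (x t j - x t i) = 0 :=
    sum_smul_sum_smul_eq_zero_of_odd biotSavart_neg (Γ t) (x t)
  have hdiff : ∑ i, (ν * ∑ j, f t j i * Γ t j) • x t i = 0 :=
    sum_stencil_smul_eq_zero ν (f t) (Γ t) (x t) (hmom0 t) (hmom1 t)
  have hderiv := HasDerivAt.fun_sum (u := univ) fun i _ => (hΓ i t).smul (hx i t)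
  rwa [sum_add_distrib, hconv, hdiff, add_zero] at hderiv

/-- Conservation of linear momentum `I₁ = ∑ Γ_i x_i` for the
coupled convection–diffusion ODE system, provided the (possibly time-dependent)
stencil satisfies the zeroth- and first-order moment conditions at all times. -/
theorem stmt_6 {N : ℕ} (ν : ℝ) (hν : 0 ≤ ν)
    (x : ℝ → Fin N → ℝ × ℝ) (Γ : ℝ → Fin N → ℝ) (f : ℝ → Fin N → Fin N → ℝ)
    (hx : ∀ i t, HasDerivAt (fun s => x s i)
      (∑ j, Γ t j • biotSavart (x t j - x t i)) t)
    (hΓ : ∀ i t, HasDerivAt (fun s => Γ s i) (ν * ∑ j, f t j i * Γ t j) t)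
    (hmom0 : ∀ t i, ∑ j, f t i j = 0)
    (hmom1 : ∀ t i, ∑ j, f t i j • (x t j - x t i) = (0 : ℝ × ℝ)) :
    ∀ t, HasDerivAt (fun s => ∑ i, Γ s i • x s i) (0 : ℝ × ℝ) t :=
  stmt_6_general ν x Γ f hx hΓ hmom0 hmom1
end

section
/- Let $\varphi \in C^{n+2}(\mathbb{R}^2)$ and let the stencil $(f_{ij})_{j}$ for particle $i$ satisfy the moment conditions: $\sum_j f_{ij} r_{ij}^\alpha = 0$ for all multi-indices $0 \leq |\alpha| \leq n+1$ with $|\alpha| \neq 2$, and $\sum_j f_{ij} (r_{ij}^x)^2 = 2$, $\sum_j f_{ij}(r_{ij}^y)^2 = 2$, $\sum_j f_{ij} r_{ij}^x r_{ij}^y = 0$, where $r_{ij} = x_j - x_i$. Assume $f_{ij} \geq 0$ for $j \neq i$ and $rh \leq |r_{ij}| \leq Rh$ whenever $j \neq i$ and $f_{ij} \neq 0$. Then $\left| \Delta\varphi(x_i) - \sum_j f_{ij}\varphi(x_j) \right| \leq 4 C_\alpha \frac{(Rh)^{n+2}}{(rh)^2} \max_{|\beta| = n+2} \|D^\beta \varphi\|_\infty$,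 where $C_\alpha = \sum_{|\beta| = n+2} 1/\beta!$. -/
/-- Mixed partial derivative `D^(a,b) φ` of a function on `ℝ²`, taken `a` times
in the first variable and `b` times in the second. -/
noncomputable def pd (a b : ℕ) (φ : ℝ × ℝ → ℝ) : ℝ × ℝ → ℝ :=
  fun p => iteratedDeriv a (fun s => iteratedDeriv b (fun t => φ (s, t)) p.2) p.1

/-!
Taylor-expand `φ` about `x i` to order `n + 1` along each segment `s ↦ x i + s • (x j - x i)`,
with Lagrange remainder. The `k`-th derivative along a segment expands binomially into the mixed
partials `pd a (k - a) φ` (Schwarz's theorem lets the directional derivatives commute), which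
bounds the remainder by `C_α (Rh)^(n+2) M`. The moment conditions make the stencil applied to the
Taylor polynomial return exactly `Δφ (x i)`, and since the second moments add up to `4` while
`|x j - x i| ≥ rh` on the support, the total off-diagonal weight is at most `4 / (rh)^2`.
-/

open Finset

namespace StencilLaplacian

section DirDeriv

variable {E F : Type*} [NormedAddCommGroup E] [NormedSpace ℝ E]
  [NormedAddCommGroup F] [NormedSpace ℝ F]

noncomputable def dirDeriv (w : E) (φ : E → F) : E → F := fun p => fderiv ℝ φ p w

theorem contDiff_dirDeriv {m : ℕ} {φ : E → F} (hφ : ContDiff ℝ (m + 1 : ℕ) φ) (w : E) :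
    ContDiff ℝ m (dirDeriv w φ) :=
  (hφ.fderiv_right (by norm_cast)).clm_apply contDiff_const

theorem contDiff_iterate_dirDeriv {m k : ℕ} {φ : E → F} (hφ : ContDiff ℝ (m + k : ℕ) φ)
    (w : E) : ContDiff ℝ m ((dirDeriv w)^[k] φ) := by
  induction k generalizing m with
  | zero => simpa using hφ
  | succ k ih =>
    rw [Function.iterate_succ_apply']
    exact contDiff_dirDeriv (ih (m := m + 1) (by rwa [Nat.add_right_comm, Nat.add_assoc])) w

theorem dirDeriv_add_smul (c d : ℝ) (u v : E) (φ : E → F) :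
    dirDeriv (c • u + d • v) φ = c • dirDeriv u φ + d • dirDeriv v φ := by
  ext p
  simp [dirDeriv]

theorem dirDeriv_sum_smul {ι : Type*} (s : Finset ι) (c : ι → ℝ) {g : ι → E → F}
    (hg : ∀ i ∈ s, Differentiable ℝ (g i)) (w : E) :
    dirDeriv w (∑ i ∈ s, c i • g i) = ∑ i ∈ s, c i • dirDeriv w (g i) := by
  ext p
  simp only [dirDeriv, Finset.sum_apply, Pi.smul_apply]
  rw [fderiv_sum fun i hi => ((hg i hi).const_smul (c i)).differentiableAt, _root_.sum_apply]
  refine Finset.sum_congr rfl fun i hi => ?_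
  rw [fderiv_const_smul (hg i hi).differentiableAt]
  rfl

theorem dirDeriv_comm {φ : E → F} (hφ : ContDiff ℝ 2 φ) (v w : E) :
    dirDeriv v (dirDeriv w φ) = dirDeriv w (dirDeriv v φ) := by
  have hφ' : Differentiable ℝ (fderiv ℝ φ) :=
    (hφ.fderiv_right (m := 1) (by norm_num)).differentiable (by norm_num)
  have second : ∀ u u' p, dirDeriv u (dirDeriv u' φ) p = fderiv ℝ (fderiv ℝ φ) p u u' :=
    fun u u' p => by
      change fderiv ℝ (fun z => fderiv ℝ φ z u') p u = _
      simp [fderiv_clm_apply (hφ' p) (differentiableAt_const u')]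
  ext p
  rw [second, second]
  exact (hφ.contDiffAt.isSymmSndFDerivAt (by simp)) v w

theorem dirDeriv_iterate_comm {a : ℕ} {φ : E → F} (hφ : ContDiff ℝ (a + 1 : ℕ) φ) (u v : E) :
    dirDeriv v ((dirDeriv u)^[a] φ) = (dirDeriv u)^[a] (dirDeriv v φ) := by
  induction a with
  | zero => rfl
  | succ a ih =>
    have h2 : ContDiff ℝ 2 ((dirDeriv u)^[a] φ) := by
      exact_mod_cast contDiff_iterate_dirDeriv (m := 2) (hφ.of_le (by norm_cast; omega)) u
    rw [Function.iterate_succ_apply', dirDeriv_comm h2, ih (hφ.of_le (by norm_cast; omega)),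
      ← Function.iterate_succ_apply' (dirDeriv u)]

theorem iterate_dirDeriv_add_smul {k : ℕ} {φ : E → F} (hφ : ContDiff ℝ k φ) (c d : ℝ) (u v : E) :
    (dirDeriv (c • u + d • v))^[k] φ =
      ∑ a ∈ range (k + 1), ((k.choose a : ℝ) * c ^ a * d ^ (k - a)) •
        (dirDeriv u)^[a] ((dirDeriv v)^[k - a] φ) := by
  induction k with
  | zero => simp
  | succ k ih =>
    set T : ℕ → ℕ → E → F := fun a b => (dirDeriv u)^[a] ((dirDeriv v)^[b] φ)
    have hT : ∀ a ≤ k, ContDiff ℝ (1 : ℕ) (T a (k - a)) := fun a ha =>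
      contDiff_iterate_dirDeriv (contDiff_iterate_dirDeriv (hφ.of_le (by norm_cast; omega)) v) u
    have hTu : ∀ a b, dirDeriv u (T a b) = T (a + 1) b := fun a b =>
      (Function.iterate_succ_apply' (dirDeriv u) a _).symm
    have hTv : ∀ a ≤ k, dirDeriv v (T a (k - a)) = T a (k - a + 1) := fun a ha => by
      simp only [T]
      rw [dirDeriv_iterate_comm (contDiff_iterate_dirDeriv (hφ.of_le (by norm_cast; omega)) v),
        ← Function.iterate_succ_apply' (dirDeriv v)]
    have hcoef : ∀ n a b : ℕ, ((n.choose a : ℝ) * c ^ a * d ^ b) • T a b =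
        n.choose a • ((c ^ a * d ^ b) • T a b) := fun n a b => by
      rw [mul_assoc, mul_smul, Nat.cast_smul_eq_nsmul]
    rw [Function.iterate_succ_apply', ih (hφ.of_le (by norm_cast; omega)),
      dirDeriv_sum_smul _ _ fun a ha =>
        (hT a (Nat.lt_succ_iff.mp (mem_range.mp ha))).differentiable one_ne_zero]
    change _ = ∑ a ∈ range (k + 1 + 1), _ • T a (k + 1 - a)
    simp only [hcoef]
    rw [sum_choose_succ_nsmul (fun a b => (c ^ a * d ^ b) • T a b) k, ← sum_add_distrib]
    refine Finset.sum_congr rfl fun a ha => ?_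
    have ha : a ≤ k := Nat.lt_succ_iff.mp (mem_range.mp ha)
    rw [dirDeriv_add_smul, hTu, hTv a ha, Nat.sub_add_comm ha, ← hcoef,
      ← Nat.cast_smul_eq_nsmul ℝ]
    module

theorem iteratedDeriv_comp_add_smul {k : ℕ} {φ : E → F} (hφ : ContDiff ℝ k φ) (p w : E) (t : ℝ) :
    iteratedDeriv k (fun s : ℝ => φ (p + s • w)) t = (dirDeriv w)^[k] φ (p + t • w) := by
  induction k generalizing φ t with
  | zero => simp
  | succ k ih =>
    have hderiv : deriv (fun s : ℝ => φ (p + s • w)) = fun s => dirDeriv w φ (p + s • w) := by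
      ext s
      have hline : HasDerivAt (fun s : ℝ => p + s • w) w s := by
        simpa using ((hasDerivAt_id s).smul_const w).const_add p
      exact ((hφ.differentiable (by simp)) _).hasFDerivAt.comp_hasDerivAt s hline |>.deriv
    rw [iteratedDeriv_succ', hderiv, ih (contDiff_dirDeriv hφ w), Function.iterate_succ_apply]

end DirDeriv

theorem pd_eq_iterate_dirDeriv {a b : ℕ} {φ : ℝ × ℝ → ℝ} (hφ : ContDiff ℝ (a + b : ℕ) φ)
    (p : ℝ × ℝ) : pd a b φ p = (dirDeriv (1, 0))^[a] ((dirDeriv (0, 1))^[b] φ) p := by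
  have hy : ∀ s, iteratedDeriv b (fun t => φ (s, t)) p.2 = (dirDeriv (0, 1))^[b] φ (s, p.2) :=
    fun s => by
      simpa using iteratedDeriv_comp_add_smul (hφ.of_le (by norm_cast; omega)) (s, 0) (0, 1) p.2
  have hx := iteratedDeriv_comp_add_smul (contDiff_iterate_dirDeriv hφ (0, 1)) (0, p.2) (1, 0) p.1
  simp only [pd, hy]
  simpa using hx

theorem iteratedDeriv_comp_add_smul_eq_sum_pd {k : ℕ} {φ : ℝ × ℝ → ℝ} (hφ : ContDiff ℝ k φ)
    (p w : ℝ × ℝ) (t : ℝ) :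
    iteratedDeriv k (fun s : ℝ => φ (p + s • w)) t =
      ∑ a ∈ range (k + 1), k.choose a * w.1 ^ a * w.2 ^ (k - a) * pd a (k - a) φ (p + t • w) := by
  have hw : w.1 • ((1, 0) : ℝ × ℝ) + w.2 • (0, 1) = w := by ext <;> simp
  have expand := iterate_dirDeriv_add_smul hφ w.1 w.2 (1, 0) (0, 1)
  rw [hw] at expand
  rw [iteratedDeriv_comp_add_smul hφ, expand, Finset.sum_apply]
  refine Finset.sum_congr rfl fun a ha => ?_
  have hak : a + (k - a) ≤ k := by rw [Nat.add_sub_cancel' (Nat.lt_succ_iff.mp (mem_range.mp ha))]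
  rw [pd_eq_iterate_dirDeriv (hφ.of_le (by exact_mod_cast hak))]
  rfl

noncomputable def taylorPoly (m : ℕ) (φ : ℝ × ℝ → ℝ) (p w : ℝ × ℝ) : ℝ :=
  ∑ k ∈ range (m + 1), (k.factorial : ℝ)⁻¹ *
    ∑ a ∈ range (k + 1), k.choose a * w.1 ^ a * w.2 ^ (k - a) * pd a (k - a) φ p

theorem taylorPoly_zero (m : ℕ) (φ : ℝ × ℝ → ℝ) (p : ℝ × ℝ) : taylorPoly m φ p 0 = φ p := by
  rw [taylorPoly, Finset.sum_eq_single_of_mem 0 (by simp)]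
  · simp [pd]
  · intro k hk hk0
    refine mul_eq_zero_of_right _ (Finset.sum_eq_zero fun a ha => ?_)
    have hak : a + (k - a) = k := Nat.add_sub_cancel' (Nat.lt_succ_iff.mp (mem_range.mp ha))
    simp only [Prod.fst_zero, Prod.snd_zero, mul_assoc, ← pow_add, hak,
      zero_pow hk0, zero_mul, mul_zero]

theorem abs_iteratedDeriv_comp_add_smul_div_le {k : ℕ} {φ : ℝ × ℝ → ℝ} (hφ : ContDiff ℝ k φ)
    {M B : ℝ} (hM : ∀ a b : ℕ, a + b = k → ∀ q, |pd a b φ q| ≤ M) (p : ℝ × ℝ) {w : ℝ × ℝ}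
    (h1 : |w.1| ≤ B) (h2 : |w.2| ≤ B) (t : ℝ) :
    |iteratedDeriv k (fun s : ℝ => φ (p + s • w)) t| / k.factorial ≤
      (∑ a ∈ range (k + 1), 1 / ((a.factorial : ℝ) * (k - a).factorial)) * B ^ k * M := by
  have hB : 0 ≤ B := (abs_nonneg _).trans h1
  rw [div_le_iff₀ (by positivity), iteratedDeriv_comp_add_smul_eq_sum_pd hφ, sum_mul, sum_mul,
    sum_mul]
  refine (abs_sum_le_sum_abs _ _).trans (Finset.sum_le_sum fun a ha => ?_)
  have hak : a ≤ k := Nat.lt_succ_iff.mp (mem_range.mp ha)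
  have hcoef : 1 / ((a.factorial : ℝ) * (k - a).factorial) * k.factorial = k.choose a := by
    rw [Nat.cast_choose ℝ hak]; field_simp
  calc |k.choose a * w.1 ^ a * w.2 ^ (k - a) * pd a (k - a) φ (p + t • w)|
      = k.choose a * |w.1| ^ a * |w.2| ^ (k - a) * |pd a (k - a) φ (p + t • w)| := by
        simp only [abs_mul, abs_pow, Nat.abs_cast]
    _ ≤ k.choose a * B ^ a * B ^ (k - a) * M := by
        gcongr
        exact hM a (k - a) (by omega) _
    _ = 1 / ((a.factorial : ℝ) * (k - a).factorial) * B ^ k * M * k.factorial := by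
        rw [mul_assoc (k.choose a : ℝ), ← pow_add, Nat.add_sub_cancel' hak, ← hcoef]
        ring

theorem abs_sub_taylorPoly_le {m : ℕ} {φ : ℝ × ℝ → ℝ} (hφ : ContDiff ℝ (m + 1 : ℕ) φ) {M B : ℝ}
    (hM : ∀ a b : ℕ, a + b = m + 1 → ∀ q, |pd a b φ q| ≤ M) (p : ℝ × ℝ) {w : ℝ × ℝ}
    (h1 : |w.1| ≤ B) (h2 : |w.2| ≤ B) :
    |φ (p + w) - taylorPoly m φ p w| ≤
      (∑ a ∈ range (m + 2), 1 / ((a.factorial : ℝ) * (m + 1 - a).factorial)) * B ^ (m + 1) * M := by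
  set g : ℝ → ℝ := fun s => φ (p + s • w)
  have hg : ContDiff ℝ (m + 1 : ℕ) g :=
    hφ.comp (contDiff_const.add (contDiff_id.smul contDiff_const))
  have hpoly : taylorWithinEval g m (Set.uIcc 0 1) 0 1 = taylorPoly m φ p w := by
    rw [taylor_within_apply, taylorPoly]
    refine Finset.sum_congr rfl fun k hk => ?_
    have hkm : k ≤ m + 1 := (mem_range.mp hk).le
    rw [iteratedDerivWithin_eq_iteratedDeriv (uniqueDiffOn_uIcc zero_ne_one)
      (hg.contDiffAt.of_le (by exact_mod_cast hkm)) Set.left_mem_uIcc,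
      iteratedDeriv_comp_add_smul_eq_sum_pd (hφ.of_le (by exact_mod_cast hkm))]
    simp
  obtain ⟨ξ, -, hξ⟩ := taylor_mean_remainder_lagrange_iteratedDeriv (f := g) zero_ne_one
    (by exact_mod_cast hg.contDiffOn)
  have hg1 : g 1 = φ (p + w) := by simp [g]
  rw [← hg1, ← hpoly, hξ]
  simpa [abs_div] using abs_iteratedDeriv_comp_add_smul_div_le hφ hM p h1 h2 ξ

section Stencil

variable {ι : Type*} [Fintype ι]

theorem sum_mul_taylorPoly_eq_laplacian {m : ℕ} (hm : 2 ≤ m) (φ : ℝ × ℝ → ℝ) (p : ℝ × ℝ)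
    (f : ι → ℝ) (d : ι → ℝ × ℝ)
    (hmom : ∀ a b : ℕ, a + b ≤ m → a + b ≠ 2 → ∑ j, f j * (d j).1 ^ a * (d j).2 ^ b = 0)
    (hxx : ∑ j, f j * (d j).1 ^ 2 = 2) (hyy : ∑ j, f j * (d j).2 ^ 2 = 2)
    (hxy : ∑ j, f j * ((d j).1 * (d j).2) = 0) :
    ∑ j, f j * taylorPoly m φ p (d j) = pd 2 0 φ p + pd 0 2 φ p := by
  set S : ℕ → ℕ → ℝ := fun a b => ∑ j, f j * (d j).1 ^ a * (d j).2 ^ b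
  have hswap : ∑ j, f j * taylorPoly m φ p (d j) = ∑ k ∈ range (m + 1),
      (k.factorial : ℝ)⁻¹ * ∑ a ∈ range (k + 1), k.choose a * pd a (k - a) φ p * S a (k - a) := by
    simp only [taylorPoly, S, mul_sum]
    rw [Finset.sum_comm]
    refine Finset.sum_congr rfl fun k _ => ?_
    rw [Finset.sum_comm]
    exact Finset.sum_congr rfl fun a _ => Finset.sum_congr rfl fun j _ => by ring
  rw [hswap, Finset.sum_eq_single_of_mem 2 (by simp; omega)]
  · have h20 : S 2 0 = 2 := by simpa [S] using hxx
    have h02 : S 0 2 = 2 := by simpa [S] using hyy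
    have h11 : S 1 1 = 0 := by simpa [S, mul_assoc] using hxy
    norm_num [Finset.sum_range_succ, h20, h02, h11]
    ring
  · intro k hk hk2
    refine mul_eq_zero_of_right _ (Finset.sum_eq_zero fun a ha => ?_)
    simp only [Finset.mem_range] at hk ha
    rw [show S a (k - a) = 0 from hmom a (k - a) (by omega) (by omega), mul_zero]

theorem sum_erase_le_div_sq [DecidableEq ι] {i : ι} {f : ι → ℝ} {d : ι → ℝ × ℝ} {ρ c : ℝ}
    (hρ : 0 < ρ) (hdi : d i = 0) (hnonneg : ∀ j, j ≠ i → 0 ≤ f j)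
    (hsupp : ∀ j, j ≠ i → f j ≠ 0 → ρ ≤ √((d j).1 ^ 2 + (d j).2 ^ 2))
    (hc : ∑ j, f j * ((d j).1 ^ 2 + (d j).2 ^ 2) = c) :
    ∑ j ∈ univ.erase i, f j ≤ c / ρ ^ 2 := by
  rw [le_div_iff₀ (by positivity), sum_mul, ← hc, ← Finset.sum_erase_add _ _ (mem_univ i), hdi]
  simp only [Prod.fst_zero, Prod.snd_zero, zero_pow two_ne_zero, add_zero, mul_zero]
  refine Finset.sum_le_sum fun j hj => ?_
  have hji : j ≠ i := Finset.ne_of_mem_erase hj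
  rcases eq_or_ne (f j) 0 with hf | hf
  · simp [hf]
  · exact mul_le_mul_of_nonneg_left ((Real.le_sqrt hρ.le (by positivity)).mp (hsupp j hji hf))
      (hnonneg j hji)

end Stencil

theorem abs_sum_mul_le_sum_mul {ι : Type*} (s : Finset ι) {f e : ι → ℝ} {E : ℝ}
    (hf : ∀ j ∈ s, 0 ≤ f j) (he : ∀ j ∈ s, f j ≠ 0 → |e j| ≤ E) :
    |∑ j ∈ s, f j * e j| ≤ (∑ j ∈ s, f j) * E := by
  rw [sum_mul]
  refine (abs_sum_le_sum_abs _ _).trans (Finset.sum_le_sum fun j hj => ?_)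
  rcases eq_or_ne (f j) 0 with h0 | h0
  · simp [h0]
  · rw [abs_mul, abs_of_nonneg (hf j hj)]
    exact mul_le_mul_of_nonneg_left (he j hj h0) (hf j hj)

end StencilLaplacian

open StencilLaplacian in
/-- Pointwise consistency of the redistribution stencil: for a
`C^{n+2}` function `φ` and a nonnegative stencil satisfying the moment
conditions up to order `n+1` with support in the annulus `[rh, Rh]`, the
stencil approximates the Laplacian to order `h^n`. -/
theorem stmt_10 {N : ℕ} (n : ℕ) (hn : n = 1 ∨ n = 2)
    (x : Fin N → ℝ × ℝ) (f : Fin N → Fin N → ℝ) (i : Fin N)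
    (r R h : ℝ) (hr : 0 < r) (hR : 0 < R) (hh : 0 < h)
    (φ : ℝ × ℝ → ℝ) (hφ : ContDiff ℝ (n + 2 : ℕ) φ)
    (M : ℝ) (hM : ∀ a b : ℕ, a + b = n + 2 → ∀ p, |pd a b φ p| ≤ M)
    (hmom : ∀ a b : ℕ, a + b ≤ n + 1 → a + b ≠ 2 →
      ∑ j, f i j * ((x j).1 - (x i).1)^a * ((x j).2 - (x i).2)^b = 0)
    (hxx : ∑ j, f i j * ((x j).1 - (x i).1)^2 = 2)
    (hyy : ∑ j, f i j * ((x j).2 - (x i).2)^2 = 2)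
    (hxy : ∑ j, f i j * (((x j).1 - (x i).1) * ((x j).2 - (x i).2)) = 0)
    (hnonneg : ∀ j, j ≠ i → 0 ≤ f i j)
    (hsupp : ∀ j, j ≠ i → f i j ≠ 0 →
      r * h ≤ Real.sqrt (((x j).1 - (x i).1)^2 + ((x j).2 - (x i).2)^2) ∧
      Real.sqrt (((x j).1 - (x i).1)^2 + ((x j).2 - (x i).2)^2) ≤ R * h) :
    |(pd 2 0 φ (x i) + pd 0 2 φ (x i)) - ∑ j, f i j * φ (x j)| ≤
      4 * (∑ a ∈ Finset.range (n + 3),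
            1 / ((a.factorial : ℝ) * ((n + 2 - a).factorial))) *
        ((R * h)^(n + 2) / (r * h)^2) * M := by
  set d : Fin N → ℝ × ℝ := fun j => x j - x i
  set T : Fin N → ℝ := fun j => taylorPoly (n + 1) φ (x i) (d j)
  set E := (∑ a ∈ Finset.range (n + 3), 1 / ((a.factorial : ℝ) * ((n + 2 - a).factorial))) *
    (R * h) ^ (n + 2) * M
  have hE : 0 ≤ E :=
    mul_nonneg (by positivity) ((abs_nonneg _).trans (hM 0 (n + 2) (by omega) (x i)))
  have hlap : ∑ j, f i j * T j = pd 2 0 φ (x i) + pd 0 2 φ (x i) :=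
    sum_mul_taylorPoly_eq_laplacian (by omega) φ (x i) (f i) d hmom hxx hyy hxy
  have hsecond : ∑ j, f i j * ((d j).1 ^ 2 + (d j).2 ^ 2) = 4 := by
    simp only [mul_add, Finset.sum_add_distrib, d, Prod.fst_sub, Prod.snd_sub]
    linear_combination hxx + hyy
  have hweight : ∑ j ∈ Finset.univ.erase i, f i j ≤ 4 / (r * h) ^ 2 :=
    sum_erase_le_div_sq (by positivity) (sub_self _) hnonneg (fun j hj hf => (hsupp j hj hf).1)
      hsecond
  have hrem : ∀ j ∈ Finset.univ.erase i, f i j ≠ 0 → |T j - φ (x j)| ≤ E := by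
    intro j hj hf
    have hdist := (hsupp j (Finset.ne_of_mem_erase hj) hf).2
    rw [abs_sub_comm, show x j = x i + d j by simp [d]]
    exact abs_sub_taylorPoly_le hφ hM (x i)
      ((Real.abs_le_sqrt (le_add_of_nonneg_right (sq_nonneg _))).trans hdist)
      ((Real.abs_le_sqrt (le_add_of_nonneg_left (sq_nonneg _))).trans hdist)
  have hsplit : pd 2 0 φ (x i) + pd 0 2 φ (x i) - ∑ j, f i j * φ (x j) =
      ∑ j ∈ Finset.univ.erase i, f i j * (T j - φ (x j)) := by
    rw [← hlap, ← Finset.sum_sub_distrib, ← Finset.sum_erase_add _ _ (Finset.mem_univ i)]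
    simp [T, d, taylorPoly_zero, mul_sub]
  calc _ = |∑ j ∈ Finset.univ.erase i, f i j * (T j - φ (x j))| := by rw [hsplit]
    _ ≤ (∑ j ∈ Finset.univ.erase i, f i j) * E :=
        abs_sum_mul_le_sum_mul _ (fun j hj => hnonneg j (Finset.ne_of_mem_erase hj)) hrem
    _ ≤ 4 / (r * h) ^ 2 * E := by gcongr
    _ = _ := by ring
end

section
/- With notation as in the pointwise consistency estimate, for the particle field $\omega = \sum_i \Gamma_i \delta_{x_i}$ and discrete Laplacian $\Delta_h \omega = \sum_i \sum_j f_{ij}\Gamma_i \delta_{x_j}$, one has for every $\varphi \in C^{n+2}$ with bounded derivatives: $|\langle \Delta\omega - \Delta_h\omega, \varphi\rangle| \leq 4 C_\alpha \frac{(Rh)^{n+2}}{(rh)^2} \left(\sum_i |\Gamma_i|\right) \max_{|\beta|=n+2}\|D^\beta\varphi\|_\infty$, where $\langle\Delta\omega,\varphi\rangle := \sum_i \Gamma_i \Delta\varphi(x_i)$ and $C_\alpha = \sum_{|\beta|=n+2} 1/\beta!$. -/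
section

open Finset

-- Defined through one-variable derivatives rather than `fderiv`, so that `pd a b = ∂₁^a ∂₂^b`
-- holds with no smoothness assumption (`pd_eq_iterate`).
noncomputable def partialFst (ψ : ℝ × ℝ → ℝ) (p : ℝ × ℝ) : ℝ := deriv (fun s => ψ (s, p.2)) p.1

noncomputable def partialSnd (ψ : ℝ × ℝ → ℝ) (p : ℝ × ℝ) : ℝ := deriv (fun t => ψ (p.1, t)) p.2

variable {ψ : ℝ × ℝ → ℝ}

lemma iterate_partialFst_apply (a : ℕ) (ψ : ℝ × ℝ → ℝ) (s t : ℝ) :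
    partialFst^[a] ψ (s, t) = iteratedDeriv a (fun s => ψ (s, t)) s := by
  induction a generalizing s with
  | zero => rfl
  | succ a ih => simp only [Function.iterate_succ_apply', iteratedDeriv_succ, partialFst, ih]

lemma iterate_partialSnd_apply (b : ℕ) (ψ : ℝ × ℝ → ℝ) (s t : ℝ) :
    partialSnd^[b] ψ (s, t) = iteratedDeriv b (fun t => ψ (s, t)) t := by
  induction b generalizing t with
  | zero => rfl
  | succ b ih => simp only [Function.iterate_succ_apply', iteratedDeriv_succ, partialSnd, ih]

lemma pd_eq_iterate (a b : ℕ) (ψ : ℝ × ℝ → ℝ) :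
    pd a b ψ = partialFst^[a] (partialSnd^[b] ψ) := by
  ext ⟨s, t⟩
  simp only [pd, iterate_partialFst_apply, iterate_partialSnd_apply]

lemma pd_zero_zero (ψ : ℝ × ℝ → ℝ) : pd 0 0 ψ = ψ := by
  ext p
  simp only [pd, iteratedDeriv_zero]

lemma partialFst_pd (a b : ℕ) (ψ : ℝ × ℝ → ℝ) : partialFst (pd a b ψ) = pd (a + 1) b ψ := by
  rw [pd_eq_iterate, pd_eq_iterate, Function.iterate_succ_apply']

lemma partialFst_eq_fderiv {p : ℝ × ℝ} (h : DifferentiableAt ℝ ψ p) :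
    partialFst ψ p = fderiv ℝ ψ p (1, 0) := by
  have hline : HasDerivAt (fun s : ℝ => (s, p.2)) ((1 : ℝ), (0 : ℝ)) p.1 :=
    (hasDerivAt_id p.1).prodMk (hasDerivAt_const p.1 p.2)
  exact (h.hasFDerivAt.comp_hasDerivAt p.1 hline).deriv

lemma partialSnd_eq_fderiv {p : ℝ × ℝ} (h : DifferentiableAt ℝ ψ p) :
    partialSnd ψ p = fderiv ℝ ψ p (0, 1) := by
  have hline : HasDerivAt (fun t : ℝ => (p.1, t)) ((0 : ℝ), (1 : ℝ)) p.2 :=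
    (hasDerivAt_const p.2 p.1).prodMk (hasDerivAt_id p.2)
  exact (h.hasFDerivAt.comp_hasDerivAt p.2 hline).deriv

lemma partialFst_eq_fun_fderiv (h : Differentiable ℝ ψ) :
    partialFst ψ = fun p => fderiv ℝ ψ p (1, 0) :=
  funext fun p => partialFst_eq_fderiv (h p)

lemma partialSnd_eq_fun_fderiv (h : Differentiable ℝ ψ) :
    partialSnd ψ = fun p => fderiv ℝ ψ p (0, 1) :=
  funext fun p => partialSnd_eq_fderiv (h p)

lemma contDiff_partialFst {m : ℕ} (h : ContDiff ℝ (m + 1) ψ) : ContDiff ℝ m (partialFst ψ) := by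
  rw [partialFst_eq_fun_fderiv (h.differentiable (by simp))]
  exact (h.fderiv_right le_rfl).clm_apply contDiff_const

lemma contDiff_partialSnd {m : ℕ} (h : ContDiff ℝ (m + 1) ψ) : ContDiff ℝ m (partialSnd ψ) := by
  rw [partialSnd_eq_fun_fderiv (h.differentiable (by simp))]
  exact (h.fderiv_right le_rfl).clm_apply contDiff_const

lemma contDiff_iterate_partialFst {m : ℕ} (a : ℕ) (h : ContDiff ℝ (m + a : ℕ) ψ) :
    ContDiff ℝ m (partialFst^[a] ψ) := by
  induction a generalizing ψ with
  | zero => exact h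
  | succ a ih => exact ih (contDiff_partialFst (by exact_mod_cast h))

lemma contDiff_iterate_partialSnd {m : ℕ} (b : ℕ) (h : ContDiff ℝ (m + b : ℕ) ψ) :
    ContDiff ℝ m (partialSnd^[b] ψ) := by
  induction b generalizing ψ with
  | zero => exact h
  | succ b ih => exact ih (contDiff_partialSnd (by exact_mod_cast h))

lemma contDiff_pd {m a b : ℕ} (h : ContDiff ℝ (m + a + b : ℕ) ψ) : ContDiff ℝ m (pd a b ψ) := by
  rw [pd_eq_iterate]
  exact contDiff_iterate_partialFst a (contDiff_iterate_partialSnd b h)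

lemma fderiv_fderiv_apply_const {𝕜 E F : Type*} [NontriviallyNormedField 𝕜]
    [NormedAddCommGroup E] [NormedSpace 𝕜 E] [NormedAddCommGroup F] [NormedSpace 𝕜 F]
    {f : E → F} {p : E} (hd : DifferentiableAt 𝕜 (fderiv 𝕜 f) p) (u w : E) :
    fderiv 𝕜 (fun q => fderiv 𝕜 f q w) p u = fderiv 𝕜 (fderiv 𝕜 f) p u w := by
  simp [fderiv_clm_apply hd (differentiableAt_const w)]

lemma partialFst_partialSnd_comm (h : ContDiff ℝ 2 ψ) :
    partialFst (partialSnd ψ) = partialSnd (partialFst ψ) := by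
  have hdiff : Differentiable ℝ ψ := h.differentiable (by norm_num)
  ext p
  have hd : DifferentiableAt ℝ (fderiv ℝ ψ) p :=
    (h.fderiv_right (m := 1) (by norm_num)).differentiable one_ne_zero p
  rw [partialFst_eq_fderiv ((contDiff_partialSnd (m := 1) h).differentiable one_ne_zero p),
    partialSnd_eq_fderiv ((contDiff_partialFst (m := 1) h).differentiable one_ne_zero p),
    partialSnd_eq_fun_fderiv hdiff, partialFst_eq_fun_fderiv hdiff,
    fderiv_fderiv_apply_const hd, fderiv_fderiv_apply_const hd]
  exact h.contDiffAt.isSymmSndFDerivAt (by simp) _ _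

lemma partialSnd_iterate_partialFst (a : ℕ) (h : ContDiff ℝ (a + 1 : ℕ) ψ) :
    partialSnd (partialFst^[a] ψ) = partialFst^[a] (partialSnd ψ) := by
  induction a generalizing ψ with
  | zero => rfl
  | succ a ih =>
    have h2 : ContDiff ℝ 2 (partialFst^[a] ψ) :=
      contDiff_iterate_partialFst a (h.of_le (by norm_cast; omega))
    rw [Function.iterate_succ_apply', Function.iterate_succ_apply',
      ← partialFst_partialSnd_comm h2, ih (h.of_le (by norm_cast; omega))]

lemma partialSnd_pd {a b : ℕ} (h : ContDiff ℝ (a + b + 1 : ℕ) ψ) :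
    partialSnd (pd a b ψ) = pd a (b + 1) ψ := by
  rw [pd_eq_iterate, pd_eq_iterate, Function.iterate_succ_apply',
    partialSnd_iterate_partialFst a (contDiff_iterate_partialSnd b (h.of_le (by norm_cast; omega)))]

lemma hasDerivAt_comp_line {p v : ℝ × ℝ} {t : ℝ} (h : DifferentiableAt ℝ ψ (p + t • v)) :
    HasDerivAt (fun s => ψ (p + s • v))
      (v.1 * partialFst ψ (p + t • v) + v.2 * partialSnd ψ (p + t • v)) t := by
  have hline : HasDerivAt (fun s : ℝ => p + s • v) v t := by
    simpa using ((hasDerivAt_id t).smul_const v).const_add p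
  have hv : v = v.1 • ((1 : ℝ), (0 : ℝ)) + v.2 • ((0 : ℝ), (1 : ℝ)) := by simp
  have hcomp := h.hasFDerivAt.comp_hasDerivAt t hline
  rwa [hv, map_add, map_smul, map_smul, ← hv, smul_eq_mul, smul_eq_mul,
    ← partialFst_eq_fderiv h, ← partialSnd_eq_fderiv h] at hcomp

lemma iteratedDeriv_comp_line {k : ℕ} (hψ : ContDiff ℝ k ψ) (p v : ℝ × ℝ) :
    iteratedDeriv k (fun s : ℝ => ψ (p + s • v)) = fun t => ∑ β ∈ antidiagonal k,
      (k.choose β.1 : ℝ) * (v.1 ^ β.1 * v.2 ^ β.2 * pd β.1 β.2 ψ (p + t • v)) := by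
  induction k with
  | zero => ext t; simp [pd_zero_zero]
  | succ k ih =>
    ext t
    rw [iteratedDeriv_succ, ih (hψ.of_le (by norm_cast; omega))]
    have hterm : ∀ β ∈ antidiagonal k, HasDerivAt
        (fun s : ℝ => (k.choose β.1 : ℝ) * (v.1 ^ β.1 * v.2 ^ β.2 * pd β.1 β.2 ψ (p + s • v)))
        ((k.choose β.1 : ℝ) * (v.1 ^ (β.1 + 1) * v.2 ^ β.2 * pd (β.1 + 1) β.2 ψ (p + t • v)
          + v.1 ^ β.1 * v.2 ^ (β.2 + 1) * pd β.1 (β.2 + 1) ψ (p + t • v))) t := by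
      rintro ⟨a, b⟩ hab
      rw [HasAntidiagonal.mem_antidiagonal] at hab
      subst hab
      dsimp only at hψ ⊢
      have hd := hasDerivAt_comp_line (p := p) (v := v) (t := t)
        ((contDiff_pd (m := 1) (a := a) (b := b) (hψ.of_le (by norm_cast; omega))).differentiable
          one_ne_zero _)
      rw [partialFst_pd, partialSnd_pd hψ] at hd
      exact ((hd.const_mul (v.1 ^ a * v.2 ^ b)).const_mul ((a + b).choose a : ℝ)).congr_deriv
        (by ring)
    rw [(HasDerivAt.fun_sum hterm).deriv, sum_antidiagonal_choose_succ_mul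
      (fun a b => v.1 ^ a * v.2 ^ b * pd a b ψ (p + t • v)), ← sum_add_distrib]
    refine sum_congr rfl fun β hβ => ?_
    rw [HasAntidiagonal.mem_antidiagonal] at hβ
    rw [← hβ, ← Nat.choose_symm_add]
    ring

noncomputable def taylorTerm (k : ℕ) (φ : ℝ × ℝ → ℝ) (p v : ℝ × ℝ) : ℝ :=
  ∑ β ∈ antidiagonal k, v.1 ^ β.1 * v.2 ^ β.2 / (β.1.factorial * β.2.factorial) * pd β.1 β.2 φ p

noncomputable def taylorPoly (m : ℕ) (φ : ℝ × ℝ → ℝ) (p v : ℝ × ℝ) : ℝ :=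
  ∑ k ∈ range (m + 1), taylorTerm k φ p v

lemma iteratedDeriv_comp_line_eq_taylorTerm {k : ℕ} {φ : ℝ × ℝ → ℝ} (hφ : ContDiff ℝ k φ)
    (p v : ℝ × ℝ) (t : ℝ) :
    iteratedDeriv k (fun s : ℝ => φ (p + s • v)) t =
      k.factorial * taylorTerm k φ (p + t • v) v := by
  rw [iteratedDeriv_comp_line hφ, taylorTerm, mul_sum]
  refine sum_congr rfl fun ⟨a, b⟩ hab => ?_
  rw [HasAntidiagonal.mem_antidiagonal] at hab
  subst hab
  rw [Nat.cast_add_choose]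
  field_simp

-- The constant `C_α = ∑_{|β| = k} 1 / β!`.
noncomputable def invFactorialSum (k : ℕ) : ℝ :=
  ∑ β ∈ antidiagonal k, 1 / (β.1.factorial * β.2.factorial : ℝ)

lemma invFactorialSum_nonneg (k : ℕ) : 0 ≤ invFactorialSum k :=
  sum_nonneg fun _ _ => by positivity

lemma abs_taylorTerm_le {k : ℕ} {φ : ℝ × ℝ → ℝ} {M : ℝ}
    (hM : ∀ a b : ℕ, a + b = k → ∀ p, |pd a b φ p| ≤ M) (p v : ℝ × ℝ) :
    |taylorTerm k φ p v| ≤ invFactorialSum k * ‖v‖ ^ k * M := by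
  rw [invFactorialSum, sum_mul, sum_mul]
  refine (abs_sum_le_sum_abs _ _).trans (sum_le_sum fun ⟨a, b⟩ hab => ?_)
  rw [HasAntidiagonal.mem_antidiagonal] at hab
  subst hab
  have h1 : |v.1| ≤ ‖v‖ := norm_fst_le v
  have h2 : |v.2| ≤ ‖v‖ := norm_snd_le v
  rw [abs_mul, abs_div, abs_mul, abs_pow, abs_pow, pow_add,
    abs_of_pos (by positivity : (0 : ℝ) < a.factorial * b.factorial)]
  have hM' := hM a b rfl p
  have hM0 : 0 ≤ M := (abs_nonneg _).trans hM'
  calc |v.1| ^ a * |v.2| ^ b / (a.factorial * b.factorial) * |pd a b φ p|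
      ≤ ‖v‖ ^ a * ‖v‖ ^ b / (a.factorial * b.factorial) * M := by gcongr
    _ = 1 / (a.factorial * b.factorial : ℝ) * (‖v‖ ^ a * ‖v‖ ^ b) * M := by ring

lemma exists_eq_taylor_add_lagrange_remainder {m : ℕ} {g : ℝ → ℝ}
    (hg : ContDiff ℝ (m + 1 : ℕ) g) :
    ∃ c, g 1 = ∑ k ∈ range (m + 1), iteratedDeriv k g 0 / k.factorial +
      iteratedDeriv (m + 1) g c / (m + 1).factorial := by
  obtain ⟨c, -, hc⟩ := taylor_mean_remainder_lagrange_iteratedDeriv (x₀ := 0) (x := 1) zero_ne_one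
    (by exact_mod_cast hg.contDiffOn)
  refine ⟨c, ?_⟩
  rw [taylor_within_apply] at hc
  have hsum : ∀ k ∈ range (m + 1),
      ((k.factorial : ℝ)⁻¹ * (1 - 0) ^ k) • iteratedDerivWithin k g (Set.uIcc 0 1) 0 =
        iteratedDeriv k g 0 / k.factorial := fun k hk => by
    rw [iteratedDerivWithin_eq_iteratedDeriv (uniqueDiffOn_uIcc zero_ne_one)
      (hg.contDiffAt.of_le (by rw [mem_range] at hk; norm_cast; omega)) Set.left_mem_uIcc]
    simp [div_eq_inv_mul]
  rw [sum_congr rfl hsum] at hc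
  simp only [sub_zero, one_pow, mul_one] at hc
  linarith

lemma abs_sub_taylorPoly_le {m : ℕ} {φ : ℝ × ℝ → ℝ} (hφ : ContDiff ℝ (m + 1 : ℕ) φ) {M : ℝ}
    (hM : ∀ a b : ℕ, a + b = m + 1 → ∀ p, |pd a b φ p| ≤ M) (p v : ℝ × ℝ) :
    |φ (p + v) - taylorPoly m φ p v| ≤ invFactorialSum (m + 1) * ‖v‖ ^ (m + 1) * M := by
  have hline : ContDiff ℝ (m + 1 : ℕ) (fun s : ℝ => φ (p + s • v)) :=
    hφ.comp (contDiff_const.add (contDiff_id.smul contDiff_const))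
  obtain ⟨c, hc⟩ := exists_eq_taylor_add_lagrange_remainder hline
  have hpoly : ∑ k ∈ range (m + 1), iteratedDeriv k (fun s : ℝ => φ (p + s • v)) 0 / k.factorial
      = taylorPoly m φ p v := sum_congr rfl fun k hk => by
    rw [mem_range] at hk
    rw [iteratedDeriv_comp_line_eq_taylorTerm (hφ.of_le (by norm_cast; omega)), zero_smul,
      add_zero]
    field_simp
  rw [iteratedDeriv_comp_line_eq_taylorTerm hφ, hpoly, one_smul] at hc
  rw [hc, add_sub_cancel_left, mul_div_cancel_left₀ _ (by positivity)]
  exact abs_taylorTerm_le hM _ v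

lemma norm_le_sqrt_sq_add_sq (v : ℝ × ℝ) : ‖v‖ ≤ √(v.1 ^ 2 + v.2 ^ 2) :=
  max_le (Real.abs_le_sqrt (le_add_of_nonneg_right (sq_nonneg _)))
    (Real.abs_le_sqrt (le_add_of_nonneg_left (sq_nonneg _)))

section Stencil

variable {ι : Type*} [Fintype ι] (x : ι → ℝ × ℝ) (i : ι) (w : ι → ℝ)

lemma sum_mul_taylorPoly_eq_laplacian {n : ℕ} (hn : 1 ≤ n)
    (hmom : ∀ a b : ℕ, a + b ≤ n + 1 → a + b ≠ 2 →
      ∑ j, w j * ((x j).1 - (x i).1) ^ a * ((x j).2 - (x i).2) ^ b = 0)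
    (hxx : ∑ j, w j * ((x j).1 - (x i).1) ^ 2 = 2)
    (hyy : ∑ j, w j * ((x j).2 - (x i).2) ^ 2 = 2)
    (hxy : ∑ j, w j * (((x j).1 - (x i).1) * ((x j).2 - (x i).2)) = 0) (φ : ℝ × ℝ → ℝ) :
    ∑ j, w j * taylorPoly (n + 1) φ (x i) (x j - x i) = pd 2 0 φ (x i) + pd 0 2 φ (x i) := by
  have hswap : ∑ j, w j * taylorPoly (n + 1) φ (x i) (x j - x i) =
      ∑ k ∈ range (n + 2), ∑ β ∈ antidiagonal k,
        (∑ j, w j * ((x j).1 - (x i).1) ^ β.1 * ((x j).2 - (x i).2) ^ β.2) /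
          (β.1.factorial * β.2.factorial) * pd β.1 β.2 φ (x i) := by
    simp only [taylorPoly, taylorTerm, mul_sum, sum_div, sum_mul]
    rw [sum_comm]
    refine sum_congr rfl fun k _ => ?_
    rw [sum_comm]
    refine sum_congr rfl fun β _ => sum_congr rfl fun j _ => ?_
    simp only [Prod.fst_sub, Prod.snd_sub]
    ring
  rw [hswap, sum_eq_single_of_mem 2 (mem_range.2 (by omega))]
  · simp only [← mul_assoc] at hxy
    rw [Nat.sum_antidiagonal_eq_sum_range_succ_mk]
    simp only [sum_range_succ, sum_range_zero]
    norm_num [hxx, hyy, hxy]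
    exact add_comm _ _
  · intro k hk hk2
    refine sum_eq_zero fun β hβ => ?_
    rw [HasAntidiagonal.mem_antidiagonal] at hβ
    rw [hmom β.1 β.2 (by rw [mem_range] at hk; omega) (by omega), zero_div, zero_mul]

lemma sum_erase_le_div_sq [DecidableEq ι] {ρ : ℝ} (hρ : 0 < ρ) (hnonneg : ∀ j, j ≠ i → 0 ≤ w j)
    (hsupp : ∀ j, j ≠ i → w j ≠ 0 → ρ ≤ √(((x j).1 - (x i).1) ^ 2 + ((x j).2 - (x i).2) ^ 2)) :
    ∑ j ∈ univ.erase i, w j ≤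
      (∑ j, w j * (((x j).1 - (x i).1) ^ 2 + ((x j).2 - (x i).2) ^ 2)) / ρ ^ 2 := by
  rw [le_div_iff₀ (by positivity), sum_mul, ← sum_erase univ (a := i)
    (f := fun j => w j * (((x j).1 - (x i).1) ^ 2 + ((x j).2 - (x i).2) ^ 2)) (by simp)]
  refine sum_le_sum fun j hj => ?_
  have hji := ne_of_mem_erase hj
  rcases eq_or_ne (w j) 0 with hw | hw
  · simp [hw]
  · exact mul_le_mul_of_nonneg_left ((Real.le_sqrt' hρ).1 (hsupp j hji hw)) (hnonneg j hji)

theorem abs_laplacian_sub_stencil_le [DecidableEq ι] {n : ℕ} (hn : 1 ≤ n) {φ : ℝ × ℝ → ℝ}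
    (hφ : ContDiff ℝ (n + 2 : ℕ) φ) {M : ℝ} (hM : ∀ a b : ℕ, a + b = n + 2 → ∀ p, |pd a b φ p| ≤ M)
    {ρ₁ ρ₂ : ℝ} (hρ₁ : 0 < ρ₁) (hρ₂ : 0 ≤ ρ₂)
    (hmom : ∀ a b : ℕ, a + b ≤ n + 1 → a + b ≠ 2 →
      ∑ j, w j * ((x j).1 - (x i).1) ^ a * ((x j).2 - (x i).2) ^ b = 0)
    (hxx : ∑ j, w j * ((x j).1 - (x i).1) ^ 2 = 2)
    (hyy : ∑ j, w j * ((x j).2 - (x i).2) ^ 2 = 2)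
    (hxy : ∑ j, w j * (((x j).1 - (x i).1) * ((x j).2 - (x i).2)) = 0)
    (hnonneg : ∀ j, j ≠ i → 0 ≤ w j)
    (hsupp : ∀ j, j ≠ i → w j ≠ 0 →
      ρ₁ ≤ √(((x j).1 - (x i).1) ^ 2 + ((x j).2 - (x i).2) ^ 2) ∧
      √(((x j).1 - (x i).1) ^ 2 + ((x j).2 - (x i).2) ^ 2) ≤ ρ₂) :
    |pd 2 0 φ (x i) + pd 0 2 φ (x i) - ∑ j, w j * φ (x j)| ≤
      4 * invFactorialSum (n + 2) * (ρ₂ ^ (n + 2) / ρ₁ ^ 2) * M := by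
  set T := fun j => taylorPoly (n + 1) φ (x i) (x j - x i)
  have hM0 : 0 ≤ M := (abs_nonneg _).trans (hM (n + 2) 0 rfl (x i))
  have hremainder (j : ι) :
      |φ (x j) - T j| ≤ invFactorialSum (n + 2) * ‖x j - x i‖ ^ (n + 2) * M := by
    have h := abs_sub_taylorPoly_le hφ hM (x i) (x j - x i)
    rwa [add_sub_cancel] at h
  have hcenter : w i * (T i - φ (x i)) = 0 := by
    have h := hremainder i
    rw [sub_self, norm_zero, zero_pow (by omega), mul_zero, zero_mul, abs_nonpos_iff,
      sub_eq_zero] at h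
    rw [h, sub_self, mul_zero]
  have hneighbour : ∀ j ∈ univ.erase i,
      |w j * (T j - φ (x j))| ≤ w j * (invFactorialSum (n + 2) * ρ₂ ^ (n + 2) * M) := by
    intro j hj
    have hji := ne_of_mem_erase hj
    rcases eq_or_ne (w j) 0 with hw | hw
    · simp [hw]
    have hdist : ‖x j - x i‖ ≤ ρ₂ :=
      (norm_le_sqrt_sq_add_sq _).trans (hsupp j hji hw).2
    rw [abs_mul, abs_of_nonneg (hnonneg j hji), abs_sub_comm]
    refine mul_le_mul_of_nonneg_left ((hremainder j).trans ?_) (hnonneg j hji)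
    gcongr
    exact invFactorialSum_nonneg _
  have hweights : ∑ j ∈ univ.erase i, w j ≤ 4 / ρ₁ ^ 2 := by
    have hsecond : ∑ j, w j * (((x j).1 - (x i).1) ^ 2 + ((x j).2 - (x i).2) ^ 2) = 4 := by
      simp only [mul_add, sum_add_distrib, hxx, hyy]
      norm_num
    exact hsecond ▸ sum_erase_le_div_sq x i w hρ₁ hnonneg fun j hj hw => (hsupp j hj hw).1
  have hsplit : pd 2 0 φ (x i) + pd 0 2 φ (x i) - ∑ j, w j * φ (x j) =
      ∑ j, w j * (T j - φ (x j)) := by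
    simp only [mul_sub, sum_sub_distrib, T,
      sum_mul_taylorPoly_eq_laplacian x i w hn hmom hxx hyy hxy]
  calc |pd 2 0 φ (x i) + pd 0 2 φ (x i) - ∑ j, w j * φ (x j)|
      ≤ ∑ j ∈ univ.erase i, |w j * (T j - φ (x j))| := by
        rw [hsplit, sum_erase _ (by rw [hcenter, abs_zero])]
        exact abs_sum_le_sum_abs _ _
    _ ≤ (∑ j ∈ univ.erase i, w j) * (invFactorialSum (n + 2) * ρ₂ ^ (n + 2) * M) := by
        rw [sum_mul]
        exact sum_le_sum hneighbour
    _ ≤ 4 / ρ₁ ^ 2 * (invFactorialSum (n + 2) * ρ₂ ^ (n + 2) * M) := by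
        gcongr
        exact mul_nonneg (mul_nonneg (invFactorialSum_nonneg _) (pow_nonneg hρ₂ _)) hM0
    _ = 4 * invFactorialSum (n + 2) * (ρ₂ ^ (n + 2) / ρ₁ ^ 2) * M := by
        ring

end Stencil

end

/-- Consistency of the discrete Laplacian `Δ_h ω` of a particle
field `ω = ∑ Γ_i δ_{x_i}`: tested against any `C^{n+2}` function `φ` with
bounded derivatives of order `n+2`, the error is `O((Rh)^{n+2}/(rh)²)·∑|Γ_i|`.
Here `⟨Δω, φ⟩ = ∑_i Γ_i Δφ(x_i)` and `⟨Δ_h ω, φ⟩ = ∑_i ∑_j Γ_i f_ij φ(x_j)`. -/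
theorem stmt_11 {N : ℕ} (n : ℕ) (hn : n = 1 ∨ n = 2)
    (x : Fin N → ℝ × ℝ) (f : Fin N → Fin N → ℝ) (Γ : Fin N → ℝ)
    (r R h : ℝ) (hr : 0 < r) (hR : 0 < R) (hh : 0 < h)
    (φ : ℝ × ℝ → ℝ) (hφ : ContDiff ℝ (n + 2 : ℕ) φ)
    (M : ℝ) (hM : ∀ a b : ℕ, a + b = n + 2 → ∀ p, |pd a b φ p| ≤ M)
    (hmom : ∀ i, ∀ a b : ℕ, a + b ≤ n + 1 → a + b ≠ 2 →
      ∑ j, f i j * ((x j).1 - (x i).1)^a * ((x j).2 - (x i).2)^b = 0)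
    (hxx : ∀ i, ∑ j, f i j * ((x j).1 - (x i).1)^2 = 2)
    (hyy : ∀ i, ∑ j, f i j * ((x j).2 - (x i).2)^2 = 2)
    (hxy : ∀ i, ∑ j, f i j * (((x j).1 - (x i).1) * ((x j).2 - (x i).2)) = 0)
    (hnonneg : ∀ i j, j ≠ i → 0 ≤ f i j)
    (hsupp : ∀ i j, j ≠ i → f i j ≠ 0 →
      r * h ≤ Real.sqrt (((x j).1 - (x i).1)^2 + ((x j).2 - (x i).2)^2) ∧
      Real.sqrt (((x j).1 - (x i).1)^2 + ((x j).2 - (x i).2)^2) ≤ R * h) :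
    |∑ i, Γ i * (pd 2 0 φ (x i) + pd 0 2 φ (x i)) -
        ∑ i, ∑ j, Γ i * f i j * φ (x j)| ≤
      4 * (∑ a ∈ Finset.range (n + 3),
            1 / ((a.factorial : ℝ) * ((n + 2 - a).factorial))) *
        ((R * h)^(n + 2) / (r * h)^2) * (∑ i, |Γ i|) * M := by
  set E := 4 * invFactorialSum (n + 2) * ((R * h) ^ (n + 2) / (r * h) ^ 2) * M
  have hrow (i : Fin N) : |pd 2 0 φ (x i) + pd 0 2 φ (x i) - ∑ j, f i j * φ (x j)| ≤ E :=
    abs_laplacian_sub_stencil_le x i (f i) (by omega) hφ hM (mul_pos hr hh) (mul_pos hR hh).le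
      (hmom i) (hxx i) (hyy i) (hxy i) (hnonneg i) (hsupp i)
  have hC : invFactorialSum (n + 2) =
      ∑ a ∈ Finset.range (n + 3), 1 / ((a.factorial : ℝ) * ((n + 2 - a).factorial)) :=
    Finset.Nat.sum_antidiagonal_eq_sum_range_succ (fun a b => 1 / (a.factorial * b.factorial : ℝ)) _
  have hsplit : ∑ i, Γ i * (pd 2 0 φ (x i) + pd 0 2 φ (x i)) - ∑ i, ∑ j, Γ i * f i j * φ (x j) =
      ∑ i, Γ i * (pd 2 0 φ (x i) + pd 0 2 φ (x i) - ∑ j, f i j * φ (x j)) := by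
    simp only [mul_sub, Finset.mul_sum, Finset.sum_sub_distrib, mul_assoc]
  calc _ = |∑ i, Γ i * (pd 2 0 φ (x i) + pd 0 2 φ (x i) - ∑ j, f i j * φ (x j))| := by
        rw [hsplit]
    _ ≤ ∑ i, |Γ i| * E := by
        refine (Finset.abs_sum_le_sum_abs _ _).trans (Finset.sum_le_sum fun i _ => ?_)
        rw [abs_mul]
        exact mul_le_mul_of_nonneg_left (hrow i) (abs_nonneg _)
    _ = _ := by
        rw [← Finset.sum_mul, ← hC]
        ring
end
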